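/- Let D = (G, O, w) be a weighted oriented graph and let e be an edge of G. Then the following are equivalent: (1) |C ∩ e| = 1 for every strong vertex cover C of D; (2) e has the property (P), and for every labeling e = {b, b′} and every vertex a ∈ V⁺ with (a, b′) ∈ E(D), one has N_D(b) ⊆ N_D⁺(a). -/

import Mathlib

/-! ## Weighted oriented graphs -/

/-- A weighted oriented graph `D = (G, 𝒪, w)`: an orientation of a finite simple
graph together with a weight function, where sources have weight `1`. -/
structure WOGraph (V : Type) where
  /-- the set of directed edges -/
  E : V → V → Prop
  irrefl : ∀ x, ¬ E x x
  asymm : ∀ x y, E x y → ¬ E y x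
  /-- the weight function -/
  w : V → ℕ
  w_pos : ∀ x, 1 ≤ w x
  source_one : ∀ x, (∀ y, ¬ E y x) → w x = 1

namespace WOGraph

variable {V : Type}

/-- The underlying simple graph `G` of `D`. -/
def graph (D : WOGraph V) : SimpleGraph V := SimpleGraph.fromRel D.E

/-- Out-neighbourhood `N⁺_D(x)`. -/
def outN (D : WOGraph V) (x : V) : Set V := {y | D.E x y}

/-- In-neighbourhood `N⁻_D(x)`. -/
def inN (D : WOGraph V) (x : V) : Set V := {y | D.E y x}

/-- Neighbourhood `N_D(x)`. -/
def nbr (D : WOGraph V) (x : V) : Set V := {y | D.E x y ∨ D.E y x}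

/-- `N_D(A)` for a set `A` of vertices. -/
def nbrS (D : WOGraph V) (A : Set V) : Set V := {y | ∃ a ∈ A, y ∈ D.nbr a}

/-- `N⁺_D(A)` for a set `A` of vertices. -/
def outNS (D : WOGraph V) (A : Set V) : Set V := {y | ∃ a ∈ A, D.E a y}

/-- `V⁺`, the set of vertices of weight `> 1`. -/
def Vplus (D : WOGraph V) : Set V := {x | 1 < D.w x}

/-- A vertex cover of `D`. -/
def IsVC (D : WOGraph V) (C : Set V) : Prop := ∀ u v, D.E u v → u ∈ C ∨ v ∈ C

/-- `L₁(C)`. -/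
def L1 (D : WOGraph V) (C : Set V) : Set V := {x | x ∈ C ∧ ∃ y, D.E x y ∧ y ∉ C}

/-- `L₂(C)`. -/
def L2 (D : WOGraph V) (C : Set V) : Set V :=
  {x | x ∈ C ∧ x ∉ D.L1 C ∧ ∃ y, D.E y x ∧ y ∉ C}

/-- `L₃(C)`. -/
def L3 (D : WOGraph V) (C : Set V) : Set V := {x | x ∈ C ∧ x ∉ D.L1 C ∧ x ∉ D.L2 C}

/-- A strong vertex cover of `D`. -/
def IsStrongVC (D : WOGraph V) (C : Set V) : Prop :=
  D.IsVC C ∧ ∀ x ∈ D.L3 C, ∃ y, D.E y x ∧ y ∈ C ∧ y ∉ D.L1 C ∧ 1 < D.w y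

/-- A weighted oriented subgraph of `D`. -/
structure OSub (D : WOGraph V) where
  verts : Set V
  E : V → V → Prop
  sub : ∀ u v, E u v → D.E u v
  memL : ∀ u v, E u v → u ∈ verts
  memR : ∀ u v, E u v → v ∈ verts

namespace OSub

variable {D : WOGraph V}

/-- The underlying simple graph of a weighted oriented subgraph. -/
def graph (H : D.OSub) : SimpleGraph V := SimpleGraph.fromRel H.E

/-- Neighbourhood inside the subgraph. -/
def nbr (H : D.OSub) (x : V) : Set V := {y | H.E x y ∨ H.E y x}

/-- Degree inside the subgraph. -/
noncomputable def deg (H : D.OSub) (x : V) : ℕ := (H.nbr x).ncard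

/-- `H` is contained in `K`. -/
def le (H K : D.OSub) : Prop := H.verts ⊆ K.verts ∧ ∀ u v, H.E u v → K.E u v

end OSub

/-- The induced weighted oriented subgraph on a set `A` of vertices. -/
def induced (D : WOGraph V) (A : Set V) : D.OSub where
  verts := A
  E u v := D.E u v ∧ u ∈ A ∧ v ∈ A
  sub _ _ h := h.1
  memL _ _ h := h.2.1
  memR _ _ h := h.2.2

/-- `K` is an induced weighted oriented subgraph of `D`. -/
def IsInducedSub {D : WOGraph V} (K : D.OSub) : Prop :=
  ∀ u v, D.E u v → u ∈ K.verts → v ∈ K.verts → K.E u v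

/-- A root oriented tree (ROT) with parent `v`. -/
def IsROT (D : WOGraph V) (T : D.OSub) (v : V) : Prop :=
  v ∈ T.verts ∧ T.graph.IsAcyclic ∧
  (∀ x ∈ T.verts, Relation.ReflTransGen T.E v x) ∧
  (∀ x ∈ T.verts, D.w x = 1 → (T.deg x = 1 ∧ x ≠ v) ∨ (T.verts = {v} ∧ x = v))

/-- A unicycle oriented subgraph whose (unique) cycle has vertex set `Cs`. -/
def IsUnicycle (D : WOGraph V) (B : D.OSub) (Cs : Set V) : Prop :=
  (∃ (n : ℕ) (f : ZMod n → V), 3 ≤ n ∧ Function.Injective f ∧ Set.range f = Cs ∧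
      ∀ i, B.E (f i) (f (i + 1))) ∧
  (∀ (a : V) (p : B.graph.Walk a a), p.IsCycle → {x | x ∈ p.support} = Cs) ∧
  (∀ y ∈ B.verts, y ∉ Cs → ∃ x ∈ Cs, Relation.ReflTransGen B.E x y) ∧
  (∀ x ∈ B.verts, D.w x = 1 → B.deg x = 1)

/-- A `⋆`-semi-forest structure on a weighted oriented subgraph `H` of `D`. -/
structure SSF (D : WOGraph V) (H : D.OSub) where
  r : ℕ
  s : ℕ
  T : Fin r → D.OSub
  parent : Fin r → V
  B : Fin s → D.OSub
  Cs : Fin s → Set V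
  hT : ∀ i, D.IsROT (T i) (parent i)
  hB : ∀ j, D.IsUnicycle (B j) (Cs j)
  hverts : H.verts = (⋃ i, (T i).verts) ∪ (⋃ j, (B j).verts)
  hE : ∀ u v, H.E u v ↔ ((∃ i, (T i).E u v) ∨ (∃ j, (B j).E u v))
  hTT : ∀ i i', i ≠ i' → Disjoint (T i).verts (T i').verts
  hBB : ∀ j j', j ≠ j' → Disjoint (B j).verts (B j').verts
  hTB : ∀ i j, Disjoint (T i).verts (B j).verts
  wv : Fin r → V
  hwv_not : ∀ i, wv i ∉ H.verts
  hwv_nbr : ∀ i, wv i ∈ D.nbr (parent i)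
  W1 : Set V
  W2 : Set V
  hW_union : W1 ∪ W2 = Set.range wv
  hW_disj : Disjoint W1 W2
  hW1_stable : ∀ x ∈ W1, ∀ y ∈ W1, ¬ D.graph.Adj x y
  hW2_plus : W2 ⊆ D.Vplus
  hW2_edge : ∀ i, wv i ∈ W2 → D.E (wv i) (parent i)
  hW1_out : D.outNS (W2 ∪ ({x | x ∈ H.verts ∧ 2 ≤ H.deg x} ∪
      {x | (∃ i, parent i = x) ∧ H.deg x = 1})) ∩ W1 = ∅

/-- The set `H̃` associated with a `⋆`-semi-forest. -/
noncomputable def SSF.tilde {D : WOGraph V} {H : D.OSub} (F : D.SSF H) : Set V :=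
  {x | x ∈ H.verts ∧ 2 ≤ H.deg x} ∪ {x | (∃ i, F.parent i = x) ∧ H.deg x = 1}

/-- `K` has a generating `⋆`-semi-forest. -/
def HasGenSSF (D : WOGraph V) (K : D.OSub) : Prop :=
  ∃ H : D.OSub, Nonempty (D.SSF H) ∧ H.verts = K.verts

/-- The `⋆`-condition for a 5-tuple `(a', a, b, b', c)` written along an induced 5-cycle. -/
def StarCond (D : WOGraph V) (a' a b b' c : V) : Prop :=
  (D.E a' a ∧ D.w a' = 1) ∧
  (D.inN a ⊆ D.nbr c ∧ D.inN a ∩ D.Vplus ⊆ D.inN c) ∧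
  (D.nbr b' ⊆ D.nbr a' ∪ D.outN a ∧ D.inN b' ∩ D.Vplus ⊆ D.inN a')

/-- The `⋆`-property for an induced 5-cycle `z 0, z 1, z 2, z 3, z 4`. -/
def HasStarProp (D : WOGraph V) (z : Fin 5 → V) : Prop :=
  ∀ i : Fin 5,
    (D.E (z i) (z (i + 1)) ∧ 1 < D.w (z i) →
      StarCond D (z (i - 1)) (z i) (z (i + 1)) (z (i + 2)) (z (i + 3))) ∧
    (D.E (z (i + 1)) (z i) ∧ 1 < D.w (z (i + 1)) →
      StarCond D (z (i + 2)) (z (i + 1)) (z i) (z (i - 1)) (z (i - 2)))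

/-- The edge ideal `I(D)` of a weighted oriented graph in `k[x_v : v ∈ V]`. -/
noncomputable def edgeIdeal (k : Type) [Field k] (D : WOGraph V) : Ideal (MvPolynomial V k) :=
  Ideal.span {f | ∃ u v, D.E u v ∧ f = MvPolynomial.X u * MvPolynomial.X v ^ D.w v}

end WOGraph

/-! ## Generic graph notions -/

/-- A vertex cover of a simple graph. -/
def gVC {W : Type} (G : SimpleGraph W) (C : Set W) : Prop :=
  ∀ u v, G.Adj u v → u ∈ C ∨ v ∈ C

/-- The vertex cover number `τ(G)`. -/
noncomputable def tau {W : Type} (G : SimpleGraph W) : ℕ :=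
  sInf {n | ∃ C : Set W, gVC G C ∧ C.ncard = n}

/-- A stable (independent) set. -/
def Stable {W : Type} (G : SimpleGraph W) (S : Set W) : Prop :=
  ∀ x ∈ S, ∀ y ∈ S, ¬ G.Adj x y

/-- `G` is well-covered: all maximal stable sets have the same cardinality. -/
def WellCovered {W : Type} (G : SimpleGraph W) : Prop :=
  ∀ S T : Set W, Maximal (Stable G) S → Maximal (Stable G) T → S.ncard = T.ncard

/-- `e` is (the vertex set of) an edge of `G`. -/
def IsEdgeSet {W : Type} (G : SimpleGraph W) (e : Set W) : Prop :=
  ∃ u v, G.Adj u v ∧ e = {u, v}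

/-- An edge `e = {b, b'}` has the property (P). -/
def PropP {W : Type} (G : SimpleGraph W) (e : Set W) : Prop :=
  ∀ a b a' b', e = {b, b'} → G.Adj a b → G.Adj a' b' → a ∉ e → a' ∉ e → G.Adj a a'

/-- A matching of `G`, as a set of (vertex sets of) edges. -/
def IsMatchingSet {W : Type} (G : SimpleGraph W) (M : Set (Set W)) : Prop :=
  (∀ e ∈ M, IsEdgeSet G e) ∧ M.Pairwise Disjoint

/-- A perfect matching of `G`. -/
def IsPerfectMatchingSet {W : Type} (G : SimpleGraph W) (M : Set (Set W)) : Prop :=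
  IsMatchingSet G M ∧ ⋃₀ M = Set.univ

/-- The matching number `ν(G)`. -/
noncomputable def nu {W : Type} (G : SimpleGraph W) : ℕ :=
  sSup {n | ∃ M, IsMatchingSet G M ∧ M.ncard = n}

/-- The degree of a vertex. -/
noncomputable def gdeg {W : Type} (G : SimpleGraph W) (x : W) : ℕ := (G.neighborSet x).ncard

/-- `v` is a simplicial vertex: its closed neighbourhood is a clique. -/
def IsSimplicialVtx {W : Type} (G : SimpleGraph W) (v : W) : Prop :=
  G.IsClique (insert v (G.neighborSet v))

/-- The set `S_G` of (vertex sets of) simplexes of `G`. -/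
def SimplexSets {W : Type} (G : SimpleGraph W) : Set (Set W) :=
  {S | ∃ v, IsSimplicialVtx G v ∧ S = insert v (G.neighborSet v)}

/-- `G` is a simplicial graph. -/
def SimplicialGraph {W : Type} (G : SimpleGraph W) : Prop :=
  ∀ v, IsSimplicialVtx G v ∨ ∃ u, G.Adj v u ∧ IsSimplicialVtx G u

/-- The cycle graph on `ZMod n`. -/
def cycGraph (n : ℕ) : SimpleGraph (ZMod n) := SimpleGraph.fromRel (fun i j => j = i + 1)

/-- `G` is chordal: it has no induced cycles of length `≥ 4`. -/
def Chordal {W : Type} (G : SimpleGraph W) : Prop :=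
  ∀ n : ℕ, 4 ≤ n → ∀ A : Set W, IsEmpty (G.induce A ≃g cycGraph n)

/-- `G` has a cycle of length `k`. -/
def HasCycleLen {W : Type} (G : SimpleGraph W) (k : ℕ) : Prop :=
  ∃ (a : W) (p : G.Walk a a), p.IsCycle ∧ p.length = k

/-- `z 0, z 1, z 2, z 3, z 4` is an induced 5-cycle of `G`. -/
def IsInduced5Cycle {W : Type} (G : SimpleGraph W) (z : Fin 5 → W) : Prop :=
  Function.Injective z ∧ ∀ i j : Fin 5, G.Adj (z i) (z j) ↔ (j = i + 1 ∨ i = j + 1)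

/-- A basic 5-cycle: an induced 5-cycle without two adjacent vertices of degree `≥ 3`. -/
def IsBasic5Cycle {W : Type} (G : SimpleGraph W) (z : Fin 5 → W) : Prop :=
  IsInduced5Cycle G z ∧ ∀ i : Fin 5, ¬ (3 ≤ gdeg G (z i) ∧ 3 ≤ gdeg G (z (i + 1)))

/-- The set `C_G` of (vertex sets of) basic 5-cycles of `G`. -/
def Basic5Sets {W : Type} (G : SimpleGraph W) : Set (Set W) :=
  {A | ∃ z : Fin 5 → W, IsBasic5Cycle G z ∧ A = Set.range z}

/-- The clique number `ω(G)`. -/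
noncomputable def cliqueNum' {W : Type} (G : SimpleGraph W) : ℕ :=
  sSup {n | ∃ s : Set W, G.IsClique s ∧ s.ncard = n}

/-- `G` is a perfect graph. -/
def IsPerfectGraph {W : Type} (G : SimpleGraph W) : Prop :=
  ∀ A : Set W, (G.induce A).chromaticNumber = (cliqueNum' (G.induce A) : ℕ∞)

/-- A `τ`-reduction of `G` into the induced subgraphs on the `A i`. -/
noncomputable def TauReduction {W : Type} (G : SimpleGraph W) (s : ℕ) (A : Fin s → Set W) : Prop :=
  (∀ i j, i ≠ j → Disjoint (A i) (A j)) ∧ (⋃ i, A i) = Set.univ ∧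
  tau G = ∑ i, tau (G.induce (A i))

/-- `G` is an SCQ graph witnessed by the matching `Q`. -/
def IsSCQ {V : Type} (D : WOGraph V) (Q : Set (Set V)) : Prop :=
  (Q = ∅ ∨ (IsMatchingSet D.graph Q ∧ ∀ e ∈ Q, PropP D.graph e)) ∧
  (∀ A ∈ SimplexSets D.graph ∪ Basic5Sets D.graph ∪ Q,
    ∀ B ∈ SimplexSets D.graph ∪ Basic5Sets D.graph ∪ Q, A = B ∨ Disjoint A B) ∧
  ⋃₀ (SimplexSets D.graph ∪ Basic5Sets D.graph ∪ Q) = Set.univ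

/-- An ideal is unmixed if all its associated primes have the same height. -/
def IsUnmixed {R : Type} [CommRing R] (I : Ideal R) : Prop :=
  ∀ p q : Ideal R, p ∈ associatedPrimes R (R ⧸ I) → q ∈ associatedPrimes R (R ⧸ I) →
    ∀ (hp : p.IsPrime) (hq : q.IsPrime),
      Order.height (⟨p, hp⟩ : PrimeSpectrum R) = Order.height (⟨q, hq⟩ : PrimeSpectrum R)
/-! ## Concrete graphs -/

/-- The 7-cycle `C₇`. -/
def C7graph : SimpleGraph (ZMod 7) := cycGraph 7

/-- Vertices of `T₁₀`. -/
inductive T10V | v | a1 | a2 | a3 | b1 | b2 | b3 | c1 | c2 | c3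
deriving DecidableEq

instance : Fintype T10V :=
  Fintype.ofList [T10V.v, T10V.a1, T10V.a2, T10V.a3, T10V.b1, T10V.b2, T10V.b3, T10V.c1, T10V.c2, T10V.c3] (by intro x; cases x <;> decide)

open T10V in
/-- The graph `T₁₀`. -/
def T10graph : SimpleGraph T10V := SimpleGraph.fromRel (fun x y =>
  (x, y) ∈ ([(v,a1), (v,a2), (v,a3), (a1,b1), (a2,b2), (a3,b3), (b1,c1), (b2,c2),
    (b3,c3), (c1,c2), (c2,c3), (c3,c1)] : List (T10V × T10V)))

/-- Vertices of `Q₁₃`. -/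
inductive Q13V | a1 | a2 | b1 | b2 | c1 | c2 | d1 | d2 | g1 | g2 | h | h' | v
deriving DecidableEq

instance : Fintype Q13V :=
  Fintype.ofList [Q13V.a1, Q13V.a2, Q13V.b1, Q13V.b2, Q13V.c1, Q13V.c2, Q13V.d1, Q13V.d2, Q13V.g1, Q13V.g2, Q13V.h, Q13V.h', Q13V.v] (by intro x; cases x <;> decide)

open Q13V in
/-- The graph `Q₁₃`. -/
def Q13graph : SimpleGraph Q13V := SimpleGraph.fromRel (fun x y =>
  (x, y) ∈ ([(a1,a2), (a1,d1), (a2,d2), (d1,c1), (d1,g1), (d1,h), (d2,c2), (d2,g2),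
    (d2,h), (g1,b1), (g1,h'), (g2,b2), (g2,h'), (b1,c2), (b2,c1), (h,v),
    (h',v)] : List (Q13V × Q13V)))

/-- Vertices of `P₁₃`. -/
inductive P13V | a1 | a2 | a3 | a4 | b1 | b2 | b3 | b4 | c1 | c2 | d1 | d2 | v
deriving DecidableEq

instance : Fintype P13V :=
  Fintype.ofList [P13V.a1, P13V.a2, P13V.a3, P13V.a4, P13V.b1, P13V.b2, P13V.b3, P13V.b4, P13V.c1, P13V.c2, P13V.d1, P13V.d2, P13V.v] (by intro x; cases x <;> decide)

open P13V in
/-- The graph `P₁₃`. -/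
def P13graph : SimpleGraph P13V := SimpleGraph.fromRel (fun x y =>
  (x, y) ∈ ([(a1,a2), (a1,b1), (a2,b2), (a3,a4), (a3,b3), (a4,b4), (b1,c1), (b2,c1),
    (b3,c2), (b4,c2), (c1,c2), (d1,b1), (d1,b3), (d2,b2), (d2,b4), (v,d1),
    (v,d2)] : List (P13V × P13V)))

/-- Vertices of `P₁₄`. -/
inductive P14V | a1 | a2 | a3 | a4 | a5 | a6 | a7 | b1 | b2 | b3 | b4 | b5 | b6 | b7
deriving DecidableEq

instance : Fintype P14V :=
  Fintype.ofList [P14V.a1, P14V.a2, P14V.a3, P14V.a4, P14V.a5, P14V.a6, P14V.a7, P14V.b1, P14V.b2, P14V.b3, P14V.b4, P14V.b5, P14V.b6, P14V.b7] (by intro x; cases x <;> decide)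

open P14V in
/-- The graph `P₁₄`. -/
def P14graph : SimpleGraph P14V := SimpleGraph.fromRel (fun x y =>
  (x, y) ∈ ([(a1,a2), (a2,a3), (a3,a4), (a4,a5), (a5,a6), (a6,a7), (a7,a1),
    (a1,b1), (a2,b2), (a3,b3), (a4,b4), (a5,b5), (a6,b6), (a7,b7),
    (b1,b3), (b2,b4), (b3,b5), (b4,b6), (b5,b7), (b6,b1), (b7,b2)] : List (P14V × P14V)))

/-- Vertices of `P₁₀`. -/
inductive P10V | a1 | a2 | b1 | b2 | c1 | c2 | d1 | d2 | g1 | g2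
deriving DecidableEq

instance : Fintype P10V :=
  Fintype.ofList [P10V.a1, P10V.a2, P10V.b1, P10V.b2, P10V.c1, P10V.c2, P10V.d1, P10V.d2, P10V.g1, P10V.g2] (by intro x; cases x <;> decide)

open P10V in
/-- The graph `P₁₀`. -/
def P10graph : SimpleGraph P10V := SimpleGraph.fromRel (fun x y =>
  (x, y) ∈ ([(a1,b1), (b1,d2), (d2,d1), (d1,b2), (b2,a2), (a1,g1), (g1,d1), (g1,c1),
    (c1,c2), (c2,g2), (g2,a2), (d2,g2)] : List (P10V × P10V)))

/-! Strong vertex covers containing both ends of `e = {b, b'}` arise as complements of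
maximal stable sets. A non-edge `a a'` violating (P) extends to one; so does a neighbour `z`
of `b` outside `N⁺(a)`, keeping the extension away from `N⁺(a)`, which stays in `L₃` with
witness `a`. Conversely, let a strong cover contain `e`. If neither end is in `L₃`, both have
neighbours outside the cover, and (P) makes these adjacent. If `b` is in `L₃` with witness
`a`, the neighbourhood condition puts `N(b') ⊆ N⁺(a)` inside the cover, so `b'` is in `L₃`
too, and its witness `a'` satisfies both `(a, a')` and `(a', a) ∈ E(D)`. -/

lemma exists_stable_superset_dominating {W : Type} [Finite W] (G : SimpleGraph W)
    {S₀ A : Set W} (hS₀ : Stable G S₀) (hA : Disjoint S₀ A) :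
    ∃ S, S₀ ⊆ S ∧ Stable G S ∧ Disjoint S A ∧ ∀ x ∉ S, x ∉ A → ∃ y ∈ S, G.Adj x y := by
  obtain ⟨S, hS₀S, hmax⟩ :=
    Finite.exists_le_maximal (p := fun S => Stable G S ∧ Disjoint S A) ⟨hS₀, hA⟩
  refine ⟨S, hS₀S, hmax.prop.1, hmax.prop.2, fun x hxS hxA => ?_⟩
  by_contra! hx
  have hins : Stable G (insert x S) ∧ Disjoint (insert x S) A := by
    refine ⟨?_, Set.disjoint_insert_left.2 ⟨hxA, hmax.prop.2⟩⟩
    rintro p (rfl | hp) q (rfl | hq)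
    · exact G.loopless.irrefl _
    · exact hx q hq
    · exact fun h => hx p hp h.symm
    · exact hmax.prop.1 p hp q hq
  exact hxS (hmax.le_of_ge hins (Set.subset_insert x S) (Set.mem_insert x S))

namespace WOGraph

variable {V : Type} (D : WOGraph V)

lemma graph_adj_iff {x y : V} : D.graph.Adj x y ↔ y ∈ D.nbr x := by
  refine (SimpleGraph.fromRel_adj D.E x y).trans ⟨And.right, fun h => ⟨?_, h⟩⟩
  rintro rfl
  exact h.elim (D.irrefl x) (D.irrefl x)

variable {D}

lemma IsVC.mem_or_mem {C : Set V} (hC : D.IsVC C) {x y : V} (h : D.graph.Adj x y) :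
    x ∈ C ∨ y ∈ C :=
  ((D.graph_adj_iff).1 h).elim (hC x y) fun h' => (hC y x h').symm

lemma notMem_L1_iff {C : Set V} {x : V} (hx : x ∈ C) : x ∉ D.L1 C ↔ D.outN x ⊆ C := by
  simp only [L1, outN, Set.mem_ofPred_eq, hx, true_and, not_exists, not_and, not_not]
  rfl

lemma mem_L3_iff {C : Set V} {x : V} : x ∈ D.L3 C ↔ x ∈ C ∧ D.nbr x ⊆ C := by
  simp only [L3, L2, L1, nbr, Set.mem_ofPred_eq, Set.ofPred_subset]
  grind

lemma isStrongVC_compl {S A : Set V} (hS : Stable D.graph S) (hSA : Disjoint S A)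
    (hdom : ∀ x ∉ S, x ∉ A → ∃ y ∈ S, D.graph.Adj x y)
    (hwit : ∀ x ∈ A, ∃ a, D.E a x ∧ a ∈ D.Vplus ∧ D.outN a ⊆ A) :
    D.IsStrongVC Sᶜ := by
  refine ⟨fun p q hpq => ?_, fun x hx => ?_⟩
  · by_contra! h
    exact hS p (not_not.1 h.1) q (not_not.1 h.2) ((D.graph_adj_iff).2 (Or.inl hpq))
  obtain ⟨hxC, hnbr⟩ := mem_L3_iff.1 hx
  have hxA : x ∈ A := by
    by_contra hxA
    obtain ⟨y, hyS, hxy⟩ := hdom x hxC hxA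
    exact hnbr ((D.graph_adj_iff).1 hxy) hyS
  obtain ⟨a, hax, ha, haA⟩ := hwit x hxA
  have haC : a ∈ Sᶜ := hnbr (Or.inr hax)
  exact ⟨a, hax, haC, (notMem_L1_iff haC).2 (haA.trans hSA.subset_compl_left), ha⟩

lemma exists_isStrongVC_disjoint [Finite V] {S₀ A : Set V} (hS₀ : Stable D.graph S₀)
    (hA : Disjoint S₀ A) (hwit : ∀ x ∈ A, ∃ a, D.E a x ∧ a ∈ D.Vplus ∧ D.outN a ⊆ A) :
    ∃ C, D.IsStrongVC C ∧ Disjoint C S₀ ∧ A ⊆ C := by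
  obtain ⟨S, hS₀S, hS, hSA, hdom⟩ := exists_stable_superset_dominating D.graph hS₀ hA
  exact ⟨Sᶜ, isStrongVC_compl hS hSA hdom hwit,
    disjoint_compl_left.mono_right hS₀S, hSA.subset_compl_left⟩

lemma propP_of_forall_not_subset [Finite V] {e : Set V}
    (h : ∀ C, D.IsStrongVC C → ¬ e ⊆ C) : PropP D.graph e := by
  rintro a b a' b' rfl hab ha'b' - -
  by_contra hnadj
  have hstable : Stable D.graph {a, a'} := by
    rintro p (rfl | rfl) q (rfl | rfl) hpq
    exacts [D.graph.loopless.irrefl _ hpq, hnadj hpq, hnadj hpq.symm,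
      D.graph.loopless.irrefl _ hpq]
  obtain ⟨C, hC, hCa, -⟩ := exists_isStrongVC_disjoint hstable (Set.disjoint_empty _)
    (fun x hx => absurd hx (Set.notMem_empty x))
  have hout : ∀ {x y}, x ∈ ({a, a'} : Set V) → D.graph.Adj x y → y ∈ C := fun hx hxy =>
    (hC.1.mem_or_mem hxy).resolve_left (hCa.notMem_of_mem_right hx)
  exact h C hC (Set.insert_subset (hout (by simp) hab) (by simpa using hout (by simp) ha'b'))

lemma nbr_subset_outN_of_forall_not_subset [Finite V] {b b' a : V}
    (h : ∀ C, D.IsStrongVC C → ¬ {b, b'} ⊆ C) (ha : a ∈ D.Vplus) (hab' : D.E a b') :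
    D.nbr b ⊆ D.outN a := by
  intro z hz
  by_contra hza
  have hstable : Stable D.graph {z} := by
    rintro p rfl q rfl
    exact D.graph.loopless.irrefl _
  obtain ⟨C, hC, hCz, haC⟩ := exists_isStrongVC_disjoint hstable
    (Set.disjoint_singleton_left.2 hza) (fun x hx => ⟨a, hx, ha, subset_rfl⟩)
  have hbz : D.graph.Adj z b := ((D.graph_adj_iff).2 hz).symm
  have hbC : b ∈ C := (hC.1.mem_or_mem hbz).resolve_left (hCz.notMem_of_mem_right rfl)
  exact h C hC (Set.insert_subset hbC (Set.singleton_subset_iff.2 (haC hab')))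

lemma notMem_L3_of_pair_subset {C : Set V} {u v : V}
    (hN : ∀ b b' a : V, ({u, v} : Set V) = {b, b'} → a ∈ D.Vplus → D.E a b' →
      D.nbr b ⊆ D.outN a)
    (hC : D.IsStrongVC C) (hv : v ∈ C) : u ∉ D.L3 C := by
  intro hu
  obtain ⟨a, hau, haC, haL1, ha⟩ := hC.2 u hu
  have hva : D.nbr v ⊆ D.outN a := hN v u a (Set.pair_comm u v) ha hau
  have hvL3 : v ∈ D.L3 C := mem_L3_iff.2 ⟨hv, hva.trans ((notMem_L1_iff haC).1 haL1)⟩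
  obtain ⟨a', ha'v, -, -, ha'⟩ := hC.2 v hvL3
  have hua' : D.nbr u ⊆ D.outN a' := hN u v a' rfl ha' ha'v
  exact D.asymm a a' (hva (Or.inr ha'v)) (hua' (Or.inr hau))

lemma not_pair_subset_of_propP {C : Set V} {u v : V} (hP : PropP D.graph {u, v})
    (hN : ∀ b b' a : V, ({u, v} : Set V) = {b, b'} → a ∈ D.Vplus → D.E a b' →
      D.nbr b ⊆ D.outN a)
    (hC : D.IsStrongVC C) : ¬ {u, v} ⊆ C := by
  intro huv
  have hu : u ∈ C := huv (by simp)
  have hv : v ∈ C := huv (by simp)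
  have hN' : ∀ b b' a : V, ({v, u} : Set V) = {b, b'} → a ∈ D.Vplus → D.E a b' →
      D.nbr b ⊆ D.outN a := fun b b' a h => hN b b' a ((Set.pair_comm u v).trans h)
  have hexit : ∀ {x}, x ∈ C → x ∉ D.L3 C → ∃ z, D.graph.Adj z x ∧ z ∉ C := by
    intro x hx hxL3
    obtain ⟨z, hz, hzC⟩ := Set.not_subset.1 fun h => hxL3 (mem_L3_iff.2 ⟨hx, h⟩)
    exact ⟨z, ((D.graph_adj_iff).2 hz).symm, hzC⟩
  obtain ⟨z, hzu, hzC⟩ := hexit hu (notMem_L3_of_pair_subset hN hC hv)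
  obtain ⟨z', hz'v, hz'C⟩ := hexit hv (notMem_L3_of_pair_subset hN' hC hu)
  have hzz' := hP z u z' v rfl hzu hz'v (fun h => hzC (huv h)) (fun h => hz'C (huv h))
  exact (hC.1.mem_or_mem hzz').elim hzC hz'C

end WOGraph

lemma ncard_inter_eq_one_iff_not_subset {W : Type} {C e : Set W} (he : e.ncard = 2)
    (hCe : (C ∩ e).Nonempty) : (C ∩ e).ncard = 1 ↔ ¬ e ⊆ C := by
  have hfin : e.Finite := Set.finite_of_ncard_pos (by omega)
  have hpos : 0 < (C ∩ e).ncard := (Set.ncard_pos (hfin.subset Set.inter_subset_right)).2 hCe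
  have hle : (C ∩ e).ncard ≤ e.ncard := Set.ncard_le_ncard Set.inter_subset_right hfin
  refine ⟨fun h hsub => ?_, fun hsub => ?_⟩
  · rw [Set.inter_eq_right.2 hsub] at h
    omega
  · have hne : (C ∩ e).ncard ≠ 2 := fun h2 => by
      have hCe : C ∩ e = e := Set.eq_of_subset_of_ncard_le Set.inter_subset_right (by omega) hfin
      exact hsub (hCe ▸ Set.inter_subset_left)
    omega

/-- Proposition `prop-unmixed`. -/
theorem stmt5 {V : Type} [Fintype V] (D : WOGraph V) (e : Set V)
    (he : IsEdgeSet D.graph e) :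
    (∀ C : Set V, D.IsStrongVC C → (C ∩ e).ncard = 1) ↔
      (PropP D.graph e ∧
        ∀ b b' a : V, e = {b, b'} → a ∈ D.Vplus → D.E a b' → D.nbr b ⊆ D.outN a) := by
  obtain ⟨u, v, huv, rfl⟩ := he
  have hcard : ∀ C, D.IsStrongVC C → ((C ∩ {u, v}).ncard = 1 ↔ ¬ {u, v} ⊆ C) :=
    fun C hC => ncard_inter_eq_one_iff_not_subset (Set.ncard_pair huv.ne)
      ((hC.1.mem_or_mem huv).elim (fun h => ⟨u, h, by simp⟩) fun h => ⟨v, h, by simp⟩)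
  rw [forall_congr' fun C => imp_congr_right (hcard C)]
  refine ⟨fun h => ⟨WOGraph.propP_of_forall_not_subset h, ?_⟩,
    fun ⟨hP, hN⟩ C hC => WOGraph.not_pair_subset_of_propP hP hN hC⟩
  intro b b' a heq ha hab'
  exact WOGraph.nbr_subset_outN_of_forall_not_subset (heq ▸ h) ha hab'
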